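/- Under the social concavity assumptions, for any coarse correlated equilibrium π with mean ā = E_π[a]: Σ_i E_π[u_i(a)] ≤ Σ_i u_i(ā) (by concavity of the welfare) and Σ_i E_π[u_i(a)] ≥ Σ_i u_i(ā) (combining the CCE property with convexity of each u_i in opponents' actions), hence Σ_i E_π[u_i(a)] = Σ_i u_i(ā). -/

import Mathlib

open MeasureTheory

/-!
Jensen's inequality for the concave welfare `∑ i, u i` gives `𝔼[∑ i, u i] ≤ ∑ i, u i ā`.
Conversely, replacing player `i`'s action by the constant `ā i` produces a distribution whose
mean is still `ā` and which lives in the slice `{b | b i = ā i}`, where `u i` is convex; Jensen's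
inequality there and the coarse correlated equilibrium condition for the deviation `ā i` give
`u i ā ≤ 𝔼[u i (update a i (ā i))] ≤ 𝔼[u i]`.
-/

theorem Integrable.of_ae_mem_isCompact {X F : Type*} [MeasurableSpace X] [NormedAddCommGroup F]
    {μ : Measure X} [IsFiniteMeasure μ] {f : X → F} (hf : AEStronglyMeasurable f μ) {K : Set F}
    (hK : IsCompact K) (hfK : ∀ᵐ x ∂μ, f x ∈ K) : Integrable f μ := by
  obtain ⟨C, hC⟩ := hK.exists_bound_of_continuousOn continuous_id.continuousOn
  exact Integrable.mono' (integrable_const C) hf (hfK.mono fun x => hC (f x))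

theorem Continuous.integrable_of_ae_mem_isCompact {X F : Type*} [TopologicalSpace X]
    [MeasurableSpace X] [OpensMeasurableSpace X] [NormedAddCommGroup F]
    [SecondCountableTopologyEither X F] {μ : Measure X} [IsFiniteMeasure μ] {f : X → F}
    (hf : Continuous f) {K : Set X} (hK : IsCompact K) (hμK : ∀ᵐ x ∂μ, x ∈ K) :
    Integrable f μ :=
  Integrable.of_ae_mem_isCompact hf.aestronglyMeasurable (hK.image hf)
    (hμK.mono fun _ => Set.mem_image_of_mem f)

section Update

variable {ι : Type*} [Fintype ι] [DecidableEq ι] {E : ι → Type*}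
  [∀ i, NormedAddCommGroup (E i)] [∀ i, NormedSpace ℝ (E i)] [∀ i, CompleteSpace (E i)]
  [∀ i, MeasurableSpace (E i)] {μ : Measure (∀ i, E i)}

theorem integral_update [IsProbabilityMeasure μ] (hμ : Integrable (fun a => a) μ) (i : ι)
    (c : E i) : ∫ a, Function.update a i c ∂μ = Function.update (∫ a, a ∂μ) i c := by
  have hcoord : ∀ j, Integrable (fun a : ∀ i, E i => Function.update a i c j) μ := by
    intro j
    rcases eq_or_ne j i with rfl | hj
    · simp
    · simpa [Function.update_of_ne hj] using hμ.eval j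
  funext j
  rw [eval_integral hcoord]
  rcases eq_or_ne j i with rfl | hj
  · simp
  · simp only [Function.update_of_ne hj, eval_integral hμ.eval]

variable [∀ i, BorelSpace (E i)]
  [∀ i, SecondCountableTopology (E i)] [IsProbabilityMeasure μ]

theorem ConvexOn.map_update_integral_le {S : ∀ i, Set (E i)} (hS : ∀ i, IsCompact (S i))
    (hμS : ∀ᵐ a ∂μ, a ∈ Set.univ.pi S) {i : ι} {c : E i} (hc : c ∈ S i) {f : (∀ i, E i) → ℝ}
    (hf : Continuous f) (hconv : ConvexOn ℝ {b | b ∈ Set.univ.pi S ∧ b i = c} f) :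
    f (Function.update (∫ a, a ∂μ) i c) ≤ ∫ a, f (Function.update a i c) ∂μ := by
  have hslice : IsCompact {b | b ∈ Set.univ.pi S ∧ b i = c} :=
    (isCompact_univ_pi hS).inter_right (isClosed_eq (continuous_apply i) continuous_const)
  have hupdate : Continuous fun a : ∀ i, E i => Function.update a i c :=
    continuous_id.update i continuous_const
  have hmem : ∀ᵐ a ∂μ, Function.update a i c ∈ {b | b ∈ Set.univ.pi S ∧ b i = c} :=
    hμS.mono fun a ha =>
      ⟨(Set.update_mem_pi_iff_of_mem ha).2 fun _ => hc, Function.update_self i c a⟩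
  have hjensen := hconv.map_integral_le hf.continuousOn hslice.isClosed hmem
    (Integrable.of_ae_mem_isCompact hupdate.aestronglyMeasurable hslice hmem)
    (Integrable.of_ae_mem_isCompact (hf.comp hupdate).aestronglyMeasurable (hslice.image hf)
      (hmem.mono fun _ => Set.mem_image_of_mem f))
  rwa [integral_update (continuous_id.integrable_of_ae_mem_isCompact (isCompact_univ_pi hS) hμS)]
    at hjensen

end Update

theorem stmt_6_general {ι : Type*} [Fintype ι] [DecidableEq ι]
    (d : ι → ℕ)
    (S : ∀ i, Set (EuclideanSpace ℝ (Fin (d i))))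
    (hSconv : ∀ i, Convex ℝ (S i)) (hScomp : ∀ i, IsCompact (S i))
    (u : ι → (∀ i, EuclideanSpace ℝ (Fin (d i))) → ℝ)
    (hcont : ∀ i, Continuous (u i))
    (hconc : ConcaveOn ℝ (Set.univ.pi S) (fun a => ∑ i, u i a))
    (hconv : ∀ (i : ι) (ai : EuclideanSpace ℝ (Fin (d i))),
      ConvexOn ℝ {b | b ∈ Set.univ.pi S ∧ b i = ai} (u i))
    (π : Measure (∀ i, EuclideanSpace ℝ (Fin (d i))))
    [IsProbabilityMeasure π]
    (hsupp : ∀ᵐ a ∂π, a ∈ Set.univ.pi S)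
    (hCCE : ∀ (i : ι), ∀ ai' ∈ S i,
      (∫ a, u i (Function.update a i ai') ∂π) ≤ ∫ a, u i a ∂π)
    (abar : ∀ i, EuclideanSpace ℝ (Fin (d i)))
    (habar : abar = ∫ a, a ∂π) :
    ((∑ i, ∫ a, u i a ∂π) ≤ ∑ i, u i abar) ∧
    ((∑ i, u i abar) ≤ ∑ i, ∫ a, u i a ∂π) ∧
    ((∑ i, ∫ a, u i a ∂π) = ∑ i, u i abar) := by
  have hP : IsCompact (Set.univ.pi S) := isCompact_univ_pi hScomp
  have hid : Integrable (fun a => a) π := continuous_id.integrable_of_ae_mem_isCompact hP hsupp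
  have habarS : ∀ i, abar i ∈ S i := fun i =>
    habar ▸ (convex_pi fun i _ => hSconv i).integral_mem hP.isClosed hsupp hid i (Set.mem_univ i)
  have hupper : (∑ i, ∫ a, u i a ∂π) ≤ ∑ i, u i abar := by
    have hwelfare : Continuous fun a => ∑ i, u i a := continuous_finsetSum _ fun i _ => hcont i
    rw [← integral_finsetSum _ fun i _ => (hcont i).integrable_of_ae_mem_isCompact hP hsupp, habar]
    exact hconc.le_map_integral hwelfare.continuousOn hP.isClosed hsupp hid
      (hwelfare.integrable_of_ae_mem_isCompact hP hsupp)
  have hlower : (∑ i, u i abar) ≤ ∑ i, ∫ a, u i a ∂π := Finset.sum_le_sum fun i _ => by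
    have hdeviation :=
      ConvexOn.map_update_integral_le hScomp hsupp (habarS i) (hcont i) (hconv i (abar i))
    rw [← habar, Function.update_eq_self] at hdeviation
    exact hdeviation.trans (hCCE i (abar i) (habarS i))
  exact ⟨hupper, hlower, le_antisymm hupper hlower⟩

/-- For a CCE π with mean ā in a socially concave game:
Σ_i E_π[u_i] ≤ Σ_i u_i(ā) by concavity, Σ_i E_π[u_i] ≥ Σ_i u_i(ā) by the CCE
property and convexity, hence equality. -/
theorem stmt_6 {ι : Type*} [Fintype ι] [Nonempty ι] [DecidableEq ι]
    (d : ι → ℕ)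
    (S : ∀ i, Set (EuclideanSpace ℝ (Fin (d i))))
    (hSne : ∀ i, (S i).Nonempty)
    (hSconv : ∀ i, Convex ℝ (S i)) (hScomp : ∀ i, IsCompact (S i))
    (u : ι → (∀ i, EuclideanSpace ℝ (Fin (d i))) → ℝ)
    (hcont : ∀ i, Continuous (u i))
    (hconc : ConcaveOn ℝ (Set.univ.pi S) (fun a => ∑ i, u i a))
    (hconv : ∀ (i : ι) (ai : EuclideanSpace ℝ (Fin (d i))),
      ConvexOn ℝ {b | b ∈ Set.univ.pi S ∧ b i = ai} (u i))
    (π : Measure (∀ i, EuclideanSpace ℝ (Fin (d i))))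
    [IsProbabilityMeasure π]
    (hsupp : ∀ᵐ a ∂π, a ∈ Set.univ.pi S)
    (hCCE : ∀ (i : ι), ∀ ai' ∈ S i,
      (∫ a, u i (Function.update a i ai') ∂π) ≤ ∫ a, u i a ∂π)
    (abar : ∀ i, EuclideanSpace ℝ (Fin (d i)))
    (habar : abar = ∫ a, a ∂π) :
    ((∑ i, ∫ a, u i a ∂π) ≤ ∑ i, u i abar) ∧
    ((∑ i, u i abar) ≤ ∑ i, ∫ a, u i a ∂π) ∧
    ((∑ i, ∫ a, u i a ∂π) = ∑ i, u i abar) :=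
  stmt_6_general d S hSconv hScomp u hcont hconc hconv π hsupp hCCE abar habar
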